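/- arXiv:2202.04005 — 2 statements merged into one kernel-verified Lean document; each statement's English description precedes it below -/
import Mathlib

section
/- In the feature-map setup, for every x ∈ X: τ² ‖V_n(x)‖²_{ℓ²} ≤ σ̄_n²(x). In particular, σ̄_n²(x) ≥ 0 and ‖V_n(x)‖_{ℓ²} ≤ σ̄_n(x)/τ. -/
open Matrix MeasureTheory ProbabilityTheory
open scoped RealInnerProductSpace

variable {H : Type*} [NormedAddCommGroup H] [InnerProductSpace ℝ H] {X : Type*}

/-- The kernel associated with the feature map `φ`: `k(a,b) = ⟪φ(a), φ(b)⟫`. -/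
noncomputable def kern (φ : X → H) (a b : X) : ℝ := ⟪φ a, φ b⟫

/-- The vector `k_Z(x) = (k(x,z_1), …, k(x,z_m))`. -/
noncomputable def kZvec {m : ℕ} (φ : X → H) (z : Fin m → X) (x : X) : Fin m → ℝ :=
  fun i => kern φ x (z i)

/-- The Gram matrix `K_ZZ = [k(z_i, z_j)]`. -/
noncomputable def KZZ {m : ℕ} (φ : X → H) (z : Fin m → X) : Matrix (Fin m) (Fin m) ℝ :=
  Matrix.of fun i j => kern φ (z i) (z j)

/-- The cross-kernel matrix `K_XZ = [k(x_i, z_j)]`. -/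
noncomputable def KXZ {n m : ℕ} (φ : X → H) (xs : Fin n → X) (z : Fin m → X) :
    Matrix (Fin n) (Fin m) ℝ :=
  Matrix.of fun i j => kern φ (xs i) (z j)

/-- The Gram matrix `K_XX = [k(x_i, x_j)]`. -/
noncomputable def KXX {n : ℕ} (φ : X → H) (xs : Fin n → X) : Matrix (Fin n) (Fin n) ℝ :=
  Matrix.of fun i j => kern φ (xs i) (xs j)

/-- The weight vector `V_n(x)`, with `V_n(x)ᵀ = k_Z(x)ᵀ (τ² K_ZZ + K_XZᵀ K_XZ)⁻¹ K_XZᵀ`. -/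
noncomputable def Vn {n m : ℕ} (φ : X → H) (τ : ℝ) (xs : Fin n → X) (z : Fin m → X) (x : X) :
    Fin n → ℝ :=
  Matrix.vecMul (Matrix.vecMul (kZvec φ z x) (τ ^ 2 • KZZ φ z + (KXZ φ xs z)ᵀ * KXZ φ xs z)⁻¹)
    (KXZ φ xs z)ᵀ

/-- The approximate (sparse) posterior variance `σ̄_n²(x)`. -/
noncomputable def approxVarSq {n m : ℕ} (φ : X → H) (τ : ℝ) (xs : Fin n → X) (z : Fin m → X)
    (x : X) : ℝ :=
  kern φ x x - kZvec φ z x ⬝ᵥ ((KZZ φ z)⁻¹).mulVec (kZvec φ z x)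
    + kZvec φ z x ⬝ᵥ
      ((KZZ φ z + (τ ^ 2)⁻¹ • ((KXZ φ xs z)ᵀ * KXZ φ xs z))⁻¹).mulVec (kZvec φ z x)

/-- The approximate posterior standard deviation `σ̄_n(x) ≥ 0`. -/
noncomputable def approxSig {n m : ℕ} (φ : X → H) (τ : ℝ) (xs : Fin n → X) (z : Fin m → X)
    (x : X) : ℝ :=
  Real.sqrt (approxVarSq φ τ xs z x)

lemma gram_quad {m : ℕ} (w : Fin m → H) (v : Fin m → ℝ) :
    v ⬝ᵥ (Matrix.of fun i j => (⟪w i, w j⟫ : ℝ)).mulVec v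
      = ⟪∑ i, v i • w i, ∑ i, v i • w i⟫ := by
  rw [inner_sum]
  simp only [sum_inner, real_inner_smul_left, real_inner_smul_right]
  simp only [dotProduct, Matrix.mulVec, Matrix.of_apply, Finset.mul_sum]
  rw [Finset.sum_comm]
  refine Finset.sum_congr rfl fun i _ => Finset.sum_congr rfl fun j _ => ?_
  rw [real_inner_comm]; ring

lemma gram_posDef {m : ℕ} (w : Fin m → H) (hlin : LinearIndependent ℝ w) :
    (Matrix.of fun i j => (⟪w i, w j⟫ : ℝ)).PosDef := by
  refine Matrix.PosDef.of_dotProduct_mulVec_pos ?_ fun v hv => ?_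
  · ext i j
    simp [Matrix.conjTranspose_apply, real_inner_comm]
  · have hy : ∑ i, v i • w i ≠ 0 := by
      intro h
      exact hv (funext fun i => (Fintype.linearIndependent_iff.mp hlin v h) i)
    have : (0:ℝ) < ⟪∑ i, v i • w i, ∑ i, v i • w i⟫ := by
      rw [real_inner_self_eq_norm_sq]
      exact pow_pos (norm_pos_iff.mpr hy) 2
    simpa [star_trivial, gram_quad w v] using this


/-- The noise term of the approximate posterior variance: `τ² ‖V_n(x)‖² ≤ σ̄_n²(x)`;
in particular `σ̄_n²(x) ≥ 0` and `‖V_n(x)‖ ≤ σ̄_n(x)/τ`. -/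
theorem noise_term_le_approxVarSq
    [Nonempty X] (φ : X → H) (τ : ℝ) (hτ : 0 < τ)
    {m n : ℕ} (z : Fin m → X) (xs : Fin n → X)
    (hlin : LinearIndependent ℝ fun i => φ (z i)) (x : X) :
    τ ^ 2 * ∑ i, Vn φ τ xs z x i ^ 2 ≤ approxVarSq φ τ xs z x
    ∧ 0 ≤ approxVarSq φ τ xs z x
    ∧ Real.sqrt (∑ i, Vn φ τ xs z x i ^ 2) ≤ approxSig φ τ xs z x / τ := by
  classical
  set kv : Fin m → ℝ := kZvec φ z x with hkv
  set A : Matrix (Fin n) (Fin m) ℝ := KXZ φ xs z with hA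
  set G : Matrix (Fin m) (Fin m) ℝ := KZZ φ z with hG
  set B : Matrix (Fin m) (Fin m) ℝ := τ ^ 2 • G + Aᵀ * A with hB
  have hGgram : G = Matrix.of fun i j => (⟪φ (z i), φ (z j)⟫ : ℝ) := rfl
  have hGpd : G.PosDef := hGgram ▸ gram_posDef _ hlin
  have hAtA : (Aᵀ * A).PosSemidef := by
    have := Matrix.posSemidef_conjTranspose_mul_self A
    simpa using this
  have hBpd : B.PosDef := by
    refine Matrix.PosDef.of_dotProduct_mulVec_pos ?_ fun v hv => ?_
    · have h1 := hGpd.1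
      have h2 := hAtA.1
      rw [hB, Matrix.IsHermitian, Matrix.conjTranspose_add, Matrix.conjTranspose_smul, h2]
      congr 1
      rw [h1]
      simp
    · have h1 := hGpd.dotProduct_mulVec_pos hv
      have h2 := hAtA.dotProduct_mulVec_nonneg v
      have expand : star v ⬝ᵥ B.mulVec v
          = τ^2 * (star v ⬝ᵥ G.mulVec v) + star v ⬝ᵥ (Aᵀ*A).mulVec v := by
        rw [hB, Matrix.add_mulVec, Matrix.smul_mulVec, dotProduct_add, dotProduct_smul]
        simp [smul_eq_mul]
      rw [expand]
      have : 0 < τ^2 * (star v ⬝ᵥ G.mulVec v) := by positivity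
      linarith
  have hBdet : IsUnit B.det := hBpd.det_pos.ne'.isUnit
  have hGdet : IsUnit G.det := hGpd.det_pos.ne'.isUnit
  have hτ2 : (τ:ℝ)^2 ≠ 0 := by positivity
  -- symmetry
  have hGsymm : Gᵀ = G := by
    ext i j
    simp [hGgram, real_inner_comm]
  have hBsymm : Bᵀ = B := by
    rw [hB, Matrix.transpose_add, Matrix.transpose_smul, hGsymm, Matrix.transpose_mul,
      Matrix.transpose_transpose]
  have hBinvsymm : (B⁻¹)ᵀ = B⁻¹ := by
    rw [Matrix.transpose_nonsing_inv, hBsymm]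
  set w : Fin m → ℝ := B⁻¹.mulVec kv with hw
  have hBw : B.mulVec w = kv := by
    rw [hw, Matrix.mulVec_mulVec, Matrix.mul_nonsing_inv _ hBdet, Matrix.one_mulVec]
  -- Vn = A *ᵥ w
  have hVn : Vn φ τ xs z x = A.mulVec w := by
    rw [Vn, ← hkv, ← hA, ← hG, ← hB, Matrix.vecMul_transpose]
    rw [hw, ← Matrix.mulVec_transpose, hBinvsymm]
  -- sum of squares
  have hsum : ∑ i, Vn φ τ xs z x i ^ 2 = kv ⬝ᵥ w - τ^2 * (w ⬝ᵥ G.mulVec w) := by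
    have e1 : ∑ i, Vn φ τ xs z x i ^ 2 = (A.mulVec w) ⬝ᵥ (A.mulVec w) := by
      rw [hVn]; simp [dotProduct, pow_two]
    have e2 : (A.mulVec w) ⬝ᵥ (A.mulVec w) = ((Aᵀ * A).mulVec w) ⬝ᵥ w := by
      rw [Matrix.dotProduct_mulVec, ← Matrix.mulVec_transpose, Matrix.mulVec_mulVec]
    have e3 : (Aᵀ * A) = B - τ^2 • G := by rw [hB]; ring_nf; abel
    rw [e1, e2, e3, Matrix.sub_mulVec, Matrix.smul_mulVec, sub_dotProduct, hBw,
      smul_dotProduct, dotProduct_comm w (G.mulVec w)]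
    simp [smul_eq_mul, dotProduct_comm kv w]
  -- approxVarSq
  have hGpinv : (G + (τ^2)⁻¹ • (Aᵀ * A))⁻¹ = (τ^2) • B⁻¹ := by
    have hGp : G + (τ^2)⁻¹ • (Aᵀ * A) = (τ^2)⁻¹ • B := by
      rw [hB, smul_add, smul_smul, inv_mul_cancel₀ hτ2, one_smul]
    rw [hGp]
    apply Matrix.inv_eq_right_inv
    rw [Matrix.smul_mul, Matrix.mul_smul, smul_smul, inv_mul_cancel₀ hτ2,
      Matrix.mul_nonsing_inv _ hBdet, one_smul]
  have hvar : approxVarSq φ τ xs z x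
      = kern φ x x - kv ⬝ᵥ (G⁻¹.mulVec kv) + τ^2 * (kv ⬝ᵥ w) := by
    rw [approxVarSq, ← hkv, ← hA, ← hG, hGpinv, Matrix.smul_mulVec, dotProduct_smul]
    simp [hw, smul_eq_mul]
  -- nonnegativity of w ⬝ G w
  have hq : 0 ≤ w ⬝ᵥ G.mulVec w := by
    rw [hGgram, gram_quad]
    exact real_inner_self_nonneg
  -- Schur: kv ⬝ G⁻¹ kv ≤ kern x x
  have hschur : kv ⬝ᵥ (G⁻¹.mulVec kv) ≤ kern φ x x := by
    set u : Fin m → ℝ := G⁻¹.mulVec kv with hu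
    have hGu : G.mulVec u = kv := by
      rw [hu, Matrix.mulVec_mulVec, Matrix.mul_nonsing_inv _ hGdet, Matrix.one_mulVec]
    set y : H := ∑ i, u i • φ (z i) with hy
    have hyy : ⟪y, y⟫ = u ⬝ᵥ kv := by
      rw [hy, ← gram_quad, ← hGgram, hGu]
    have hxy : ⟪φ x, y⟫ = u ⬝ᵥ kv := by
      rw [hy, inner_sum]
      simp only [real_inner_smul_right]
      rfl
    have hs : 0 ≤ u ⬝ᵥ kv := by
      rw [← hyy, real_inner_self_eq_norm_sq]; positivity
    have hcs : (u ⬝ᵥ kv) * (u ⬝ᵥ kv) ≤ kern φ x x * (u ⬝ᵥ kv) := by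
      have := real_inner_mul_inner_self_le (φ x) y
      rwa [hxy, hyy, show (⟪φ x, φ x⟫:ℝ) = kern φ x x from rfl] at this
    have hkxx : 0 ≤ kern φ x x := by
      rw [show kern φ x x = (⟪φ x, φ x⟫:ℝ) from rfl, real_inner_self_eq_norm_sq]; positivity
    have : kv ⬝ᵥ (G⁻¹.mulVec kv) = u ⬝ᵥ kv := dotProduct_comm _ _
    rw [this]
    nlinarith [hcs, hs, hkxx]
  -- main inequality
  have hmain : τ ^ 2 * ∑ i, Vn φ τ xs z x i ^ 2 ≤ approxVarSq φ τ xs z x := by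
    rw [hsum, hvar]
    have h4 : 0 ≤ τ^2 * (τ^2 * (w ⬝ᵥ G.mulVec w)) := by positivity
    nlinarith [hschur, hq]
  have hSnn : 0 ≤ ∑ i, Vn φ τ xs z x i ^ 2 := Finset.sum_nonneg fun i _ => sq_nonneg _
  have hvar0 : 0 ≤ approxVarSq φ τ xs z x := le_trans (by positivity) hmain
  refine ⟨hmain, hvar0, ?_⟩
  rw [le_div_iff₀ hτ, approxSig]
  have : Real.sqrt (∑ i, Vn φ τ xs z x i ^ 2) * τ
      = Real.sqrt (τ^2 * ∑ i, Vn φ τ xs z x i ^ 2) := by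
    rw [Real.sqrt_mul (by positivity), Real.sqrt_sq hτ.le, mul_comm]
  rw [this]
  exact Real.sqrt_le_sqrt hmain
end

section
/- In the feature-map setup, under the RKHS-function assumption (f(x) = ⟪θ, φ(x)⟫ with ‖θ‖ ≤ C_k) and the spectral-error bound K_XX − K_XZ K_ZZ⁻¹ K_XZᵀ ⪯ λ I_n with λ ≥ 0, let P be the orthogonal projection of H onto span{φ(z_1), …, φ(z_m)} and define Π_κ[f](y) = ⟪P θ, φ(y)⟫. Then for every x ∈ X: |V_n(x)ᵀ ((f(x_1) − Π_κ[f](x_1), …, f(x_n) − Π_κ[f](x_n)))| ≤ C_k √λ σ̄_n(x) / τ. -/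
open Matrix MeasureTheory ProbabilityTheory
open scoped RealInnerProductSpace

variable {H : Type*} [NormedAddCommGroup H] [InnerProductSpace ℝ H] {X : Type*}

lemma inner_sum_sum {n m : ℕ} (a : Fin n → ℝ) (b : Fin m → ℝ) (u : Fin n → H) (w : Fin m → H) :
    ⟪∑ i, a i • u i, ∑ j, b j • w j⟫ = ∑ i, ∑ j, a i * b j * ⟪u i, w j⟫ := by
  rw [sum_inner]
  refine Finset.sum_congr rfl fun i _ => ?_
  rw [inner_sum]
  refine Finset.sum_congr rfl fun j _ => ?_
  rw [real_inner_smul_left, real_inner_smul_right]; ring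

lemma dot_mulVec_eq_sum {n : ℕ} (E : Matrix (Fin n) (Fin n) ℝ) (V W : Fin n → ℝ) :
    V ⬝ᵥ E *ᵥ W = ∑ i, ∑ j, V i * W j * E i j := by
  simp only [dotProduct, Matrix.mulVec, Finset.mul_sum]
  exact Finset.sum_congr rfl fun i _ => Finset.sum_congr rfl fun j _ => by ring

lemma dot_AtA {n m : ℕ} (M : Matrix (Fin n) (Fin m) ℝ) (u : Fin m → ℝ) :
    u ⬝ᵥ (Mᵀ * M) *ᵥ u = (M *ᵥ u) ⬝ᵥ (M *ᵥ u) := by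
  rw [← Matrix.mulVec_mulVec, Matrix.dotProduct_mulVec, ← Matrix.mulVec_transpose,
    Matrix.transpose_transpose]

lemma dot_self_nonneg {n : ℕ} (v : Fin n → ℝ) : 0 ≤ v ⬝ᵥ v :=
  Finset.sum_nonneg fun i _ => mul_self_nonneg _


lemma dot_gram' {m : ℕ} (φ : X → H) (z : Fin m → X) (a b : Fin m → ℝ) :
    a ⬝ᵥ (KZZ φ z) *ᵥ b = ⟪∑ i, a i • φ (z i), ∑ j, b j • φ (z j)⟫ := by
  rw [inner_sum_sum, dot_mulVec_eq_sum]
  rfl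

lemma KZZ_posDef' {m : ℕ} (φ : X → H) (z : Fin m → X)
    (hlin : LinearIndependent ℝ fun i => φ (z i)) : (KZZ φ z).PosDef := by
  refine Matrix.PosDef.of_dotProduct_mulVec_pos ?_ ?_
  · ext i j
    simp only [Matrix.conjTranspose_apply, KZZ, Matrix.of_apply, star_trivial, kern]
    exact real_inner_comm _ _
  · intro x hx
    rw [star_trivial, dot_gram', real_inner_self_eq_norm_sq]
    have hs : (∑ i, x i • φ (z i)) ≠ 0 := fun h =>
      hx (funext fun i => Fintype.linearIndependent_iff.mp hlin x h i)
    exact pow_pos (norm_pos_iff.mpr hs) 2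

lemma P_apply' {m : ℕ} (φ : X → H) (z : Fin m → X)
    (hlin : LinearIndependent ℝ fun i => φ (z i))
    (P : H →L[ℝ] H)
    (hPmem : ∀ v : H, P v ∈ Submodule.span ℝ (Set.range fun i => φ (z i)))
    (hPorth : ∀ v : H, ∀ w ∈ Submodule.span ℝ (Set.range fun i => φ (z i)), ⟪v - P v, w⟫ = 0)
    (v : H) :
    P v = ∑ j, ((KZZ φ z)⁻¹ *ᵥ (fun i => (⟪v, φ (z i)⟫ : ℝ))) j • φ (z j) := by
  classical
  set G := KZZ φ z with hG
  have hGpd : G.PosDef := KZZ_posDef' φ z hlin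
  have hGdet : IsUnit G.det := hGpd.det_pos.ne'.isUnit
  have hGG : G * G⁻¹ = 1 := Matrix.mul_nonsing_inv _ hGdet
  set κ : Fin m → ℝ := fun i => ⟪v, φ (z i)⟫ with hκ
  set c : Fin m → ℝ := G⁻¹ *ᵥ κ with hc
  set w : H := ∑ j, c j • φ (z j) with hw
  have hGsymm : Gᵀ = G := by
    ext i j
    simp only [Matrix.transpose_apply, hG, KZZ, Matrix.of_apply, kern]
    exact real_inner_comm _ _
  have hgen : ∀ i, ⟪v - w, φ (z i)⟫ = 0 := by
    intro i
    rw [inner_sub_left, hw, sum_inner]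
    have h1 : ∑ j, ⟪c j • φ (z j), φ (z i)⟫ = (G *ᵥ c) i := by
      rw [← hGsymm, Matrix.mulVec_transpose]
      simp only [Matrix.vecMul, dotProduct, hG, KZZ, Matrix.of_apply, kern]
      exact Finset.sum_congr rfl fun j _ => by rw [real_inner_smul_left]
    rw [h1, hc, Matrix.mulVec_mulVec, hGG, Matrix.one_mulVec]
    exact sub_self _
  have hperp : ∀ y ∈ Submodule.span ℝ (Set.range fun i => φ (z i)), ⟪v - w, y⟫ = 0 := by
    intro y hy
    induction hy using Submodule.span_induction with
    | mem y hy => obtain ⟨i, rfl⟩ := hy; exact hgen i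
    | zero => exact inner_zero_right _
    | add y₁ y₂ _ _ h1 h2 => rw [inner_add_right, h1, h2, add_zero]
    | smul t y _ h1 => rw [real_inner_smul_right, h1, mul_zero]
  have hmemw : w ∈ Submodule.span ℝ (Set.range fun i => φ (z i)) := by
    refine Submodule.sum_mem _ fun j _ => Submodule.smul_mem _ _ ?_
    exact Submodule.subset_span ⟨j, rfl⟩
  have hdiff : P v - w ∈ Submodule.span ℝ (Set.range fun i => φ (z i)) :=
    Submodule.sub_mem _ (hPmem v) hmemw
  have : ⟪P v - w, P v - w⟫ = 0 := by
    have h2 : P v - w = (v - w) - (v - P v) := by abel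
    rw [h2, inner_sub_left, ← h2, hperp _ hdiff, hPorth v _ hdiff, sub_zero]
  have := inner_self_eq_zero.mp this
  exact sub_eq_zero.mp this

lemma resid_inner' {m : ℕ} (φ : X → H) (z : Fin m → X)
    (hlin : LinearIndependent ℝ fun i => φ (z i))
    (P : H →L[ℝ] H)
    (hPmem : ∀ v : H, P v ∈ Submodule.span ℝ (Set.range fun i => φ (z i)))
    (hPorth : ∀ v : H, ∀ w ∈ Submodule.span ℝ (Set.range fun i => φ (z i)), ⟪v - P v, w⟫ = 0)
    (a b : X) :
    ⟪φ a - P (φ a), φ b - P (φ b)⟫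
      = kern φ a b - kZvec φ z a ⬝ᵥ (KZZ φ z)⁻¹ *ᵥ kZvec φ z b := by
  have h0 : ⟪P (φ a), φ b - P (φ b)⟫ = 0 := by
    rw [real_inner_comm]
    exact hPorth (φ b) _ (hPmem (φ a))
  have h1 : ⟪φ a - P (φ a), φ b - P (φ b)⟫ = ⟪φ a, φ b⟫ - ⟪φ a, P (φ b)⟫ := by
    rw [inner_sub_left, h0, sub_zero, inner_sub_right]
  rw [h1, P_apply' φ z hlin P hPmem hPorth (φ b), inner_sum]
  congr 1
  simp only [dotProduct]
  refine Finset.sum_congr rfl fun j _ => ?_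
  rw [real_inner_smul_right]
  have : kZvec φ z b = fun i => (⟪φ b, φ (z i)⟫ : ℝ) := rfl
  rw [this]
  simp only [kZvec, kern]
  ring

/-- **Term 3 of the paper's confidence-interval proof**: the projection-residual term is
bounded as `|V_n(x)ᵀ (f_{X_n} − Π_κ[f]_{X_n})| ≤ C_k √λ σ̄_n(x)/τ`. -/
theorem projection_residual_term_bound
    [Nonempty X] (φ : X → H) (τ : ℝ) (hτ : 0 < τ)
    {m n : ℕ} (z : Fin m → X) (xs : Fin n → X)
    (hlin : LinearIndependent ℝ fun i => φ (z i))
    (θ : H) (Ck : ℝ) (hCk : 0 < Ck) (hθ : ‖θ‖ ≤ Ck)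
    (lam : ℝ) (hlam : 0 ≤ lam)
    (hspec : (lam • (1 : Matrix (Fin n) (Fin n) ℝ)
        - (KXX φ xs - KXZ φ xs z * (KZZ φ z)⁻¹ * (KXZ φ xs z)ᵀ)).PosSemidef)
    (P : H →L[ℝ] H)
    (hPmem : ∀ v : H, P v ∈ Submodule.span ℝ (Set.range fun i => φ (z i)))
    (hPorth : ∀ v : H, ∀ w ∈ Submodule.span ℝ (Set.range fun i => φ (z i)), ⟪v - P v, w⟫ = 0) :
    ∀ x : X,
      |Vn φ τ xs z x ⬝ᵥ (fun i => ⟪θ, φ (xs i)⟫ - ⟪P θ, φ (xs i)⟫)|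
        ≤ Ck * Real.sqrt lam * approxSig φ τ xs z x / τ := by
  classical
  intro x
  have real_transpose_eq : ∀ {k l : ℕ} (A : Matrix (Fin k) (Fin l) ℝ), Aᴴ = Aᵀ := by
    intro k l A; ext i j; simp [Matrix.conjTranspose_apply]
  set M := KXZ φ xs z with hMdef
  set G := KZZ φ z with hGdef
  set kx := kZvec φ z x with hkxdef
  set B := τ ^ 2 • G + Mᵀ * M with hBdef
  have hτ2 : (0:ℝ) < τ ^ 2 := pow_pos hτ 2
  have hGpd : G.PosDef := KZZ_posDef' φ z hlin
  have hGsymm : Gᵀ = G := (real_transpose_eq G).symm.trans hGpd.1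
  have hApsd : ∀ v : Fin m → ℝ, 0 ≤ v ⬝ᵥ (Mᵀ * M) *ᵥ v := fun v => by
    rw [dot_AtA]; exact dot_self_nonneg _
  have hBsymm : Bᵀ = B := by
    rw [hBdef, Matrix.transpose_add, Matrix.transpose_smul, hGsymm, Matrix.transpose_mul,
      Matrix.transpose_transpose]
  have hBpd : B.PosDef := by
    refine Matrix.PosDef.of_dotProduct_mulVec_pos ((real_transpose_eq B).trans hBsymm) fun v hv => ?_
    rw [star_trivial, hBdef, Matrix.add_mulVec, dotProduct_add,
      Matrix.smul_mulVec, dotProduct_smul, smul_eq_mul]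
    have h1 : 0 < v ⬝ᵥ G *ᵥ v := by
      have := hGpd.dotProduct_mulVec_pos hv; rwa [star_trivial] at this
    nlinarith [hApsd v]
  have hBdet : IsUnit B.det := hBpd.det_pos.ne'.isUnit
  have hBB : B * B⁻¹ = 1 := Matrix.mul_nonsing_inv _ hBdet
  have hBinvsymm : (B⁻¹)ᵀ = B⁻¹ := by rw [Matrix.transpose_nonsing_inv, hBsymm]
  set u := B⁻¹ *ᵥ kx with hu
  have hVn : Vn φ τ xs z x = M *ᵥ u := by
    unfold Vn
    rw [← hMdef, ← hGdef, ← hkxdef, ← hBdef, Matrix.vecMul_transpose]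
    have hk : kx ᵥ* B⁻¹ = u := by
      rw [hu]
      conv_lhs => rw [← hBinvsymm]
      exact Matrix.vecMul_transpose _ _
    rw [hk]
  set V := Vn φ τ xs z x with hVdef
  set w := ∑ i, V i • (φ (xs i) - P (φ (xs i))) with hwdef
  have hr : ∀ i, ⟪θ, φ (xs i)⟫ - ⟪P θ, φ (xs i)⟫
      = ⟪θ - P θ, φ (xs i) - P (φ (xs i))⟫ := fun i => by
    rw [inner_sub_right, hPorth θ _ (hPmem (φ (xs i))), sub_zero, inner_sub_left]
  have hVr : V ⬝ᵥ (fun i => ⟪θ, φ (xs i)⟫ - ⟪P θ, φ (xs i)⟫) = ⟪θ - P θ, w⟫ := by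
    rw [hwdef, inner_sum]
    simp only [real_inner_smul_right, dotProduct]
    exact Finset.sum_congr rfl fun i _ => by rw [hr i]
  have hθP : ‖θ - P θ‖ ≤ Ck := by
    have h0 : ⟪θ - P θ, P θ⟫ = 0 := hPorth θ _ (hPmem θ)
    have h2 := norm_add_sq_real (θ - P θ) (P θ)
    rw [sub_add_cancel, h0] at h2
    nlinarith [norm_nonneg (P θ), norm_nonneg (θ - P θ), norm_nonneg θ, hθ, hCk,
      sq_nonneg (‖θ - P θ‖ - Ck)]
  have habs : |⟪θ - P θ, w⟫| ≤ Ck * ‖w‖ :=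
    (abs_real_inner_le_norm _ _).trans (mul_le_mul_of_nonneg_right hθP (norm_nonneg w))
  set E := KXX φ xs - M * G⁻¹ * Mᵀ with hEdef
  have hEentry : ∀ i j, E i j = ⟪φ (xs i) - P (φ (xs i)), φ (xs j) - P (φ (xs j))⟫ := by
    intro i j
    rw [resid_inner' φ z hlin P hPmem hPorth (xs i) (xs j), hEdef]
    rw [← hGdef]
    have hMG : (M * G⁻¹ * Mᵀ) i j = kZvec φ z (xs i) ⬝ᵥ G⁻¹ *ᵥ kZvec φ z (xs j) := by
      simp only [Matrix.mul_apply, Matrix.transpose_apply, dotProduct, Matrix.mulVec,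
        Finset.sum_mul, Finset.mul_sum]
      rw [Finset.sum_comm]
      refine Finset.sum_congr rfl fun a _ => Finset.sum_congr rfl fun b _ => ?_
      rw [hMdef]
      simp only [KXZ, Matrix.of_apply, kZvec, kern]
      ring
    simp only [Matrix.sub_apply, KXX, Matrix.of_apply]
    rw [hMG]
  have hw2 : ‖w‖ ^ 2 = V ⬝ᵥ E *ᵥ V := by
    rw [← real_inner_self_eq_norm_sq, hwdef, inner_sum_sum, dot_mulVec_eq_sum]
    exact Finset.sum_congr rfl fun i _ => Finset.sum_congr rfl fun j _ => by rw [hEentry i j]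
  have hspec2 : V ⬝ᵥ E *ᵥ V ≤ lam * (V ⬝ᵥ V) := by
    have h := hspec.dotProduct_mulVec_nonneg V
    rw [star_trivial, Matrix.sub_mulVec, dotProduct_sub, Matrix.smul_mulVec,
      Matrix.one_mulVec, dotProduct_smul, smul_eq_mul] at h
    linarith
  have hVV : V ⬝ᵥ V = u ⬝ᵥ (Mᵀ * M) *ᵥ u := by rw [dot_AtA, ← hVn]
  have hkxBu : kx = B *ᵥ u := by rw [hu, Matrix.mulVec_mulVec, hBB, Matrix.one_mulVec]
  have hkxu : kx ⬝ᵥ u = u ⬝ᵥ B *ᵥ u := by rw [hkxBu, dotProduct_comm]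
  have hGq : 0 ≤ u ⬝ᵥ G *ᵥ u := by
    have := hGpd.posSemidef.dotProduct_mulVec_nonneg u; rwa [star_trivial] at this
  have hBu : u ⬝ᵥ (Mᵀ * M) *ᵥ u ≤ u ⬝ᵥ B *ᵥ u := by
    rw [hBdef, Matrix.add_mulVec, dotProduct_add, Matrix.smul_mulVec,
      dotProduct_smul, smul_eq_mul]
    nlinarith
  have hc0 : 0 ≤ kern φ x x - kx ⬝ᵥ G⁻¹ *ᵥ kx := by
    have h5 := resid_inner' φ z hlin P hPmem hPorth x x
    rw [← hGdef, ← hkxdef] at h5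
    rw [← h5]
    exact real_inner_self_nonneg
  have hvar : approxVarSq φ τ xs z x = (kern φ x x - kx ⬝ᵥ G⁻¹ *ᵥ kx) + τ ^ 2 * (kx ⬝ᵥ u) := by
    unfold approxVarSq
    rw [← hGdef, ← hMdef, ← hkxdef]
    have h1 : G + (τ ^ 2)⁻¹ • (Mᵀ * M) = (τ ^ 2)⁻¹ • B := by
      rw [hBdef, smul_add, smul_smul, inv_mul_cancel₀ hτ2.ne', one_smul]
    have h2 : ((τ ^ 2)⁻¹ • B)⁻¹ = τ ^ 2 • B⁻¹ := by
      apply Matrix.inv_eq_right_inv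
      rw [Matrix.smul_mul, Matrix.mul_smul, hBB, smul_smul, inv_mul_cancel₀ hτ2.ne', one_smul]
    rw [h1, h2, Matrix.smul_mulVec, dotProduct_smul, smul_eq_mul, ← hu]
  have hstep : τ ^ 2 * (V ⬝ᵥ V) ≤ approxVarSq φ τ xs z x := by
    rw [hvar, hVV, hkxu]
    nlinarith
  have hσnn : 0 ≤ approxVarSq φ τ xs z x :=
    le_trans (mul_nonneg hτ2.le (dot_self_nonneg V)) hstep
  have hVVσ : Real.sqrt (V ⬝ᵥ V) ≤ approxSig φ τ xs z x / τ := by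
    have h3 : V ⬝ᵥ V ≤ (approxSig φ τ xs z x / τ) ^ 2 := by
      rw [approxSig, div_pow, Real.sq_sqrt hσnn, le_div_iff₀ hτ2]
      linarith [hstep]
    calc Real.sqrt (V ⬝ᵥ V) ≤ Real.sqrt ((approxSig φ τ xs z x / τ) ^ 2) :=
          Real.sqrt_le_sqrt h3
      _ = approxSig φ τ xs z x / τ :=
          Real.sqrt_sq (div_nonneg (Real.sqrt_nonneg _) hτ.le)
  have hwle : ‖w‖ ≤ Real.sqrt lam * (approxSig φ τ xs z x / τ) := by
    have h5 : ‖w‖ ≤ Real.sqrt (lam * (V ⬝ᵥ V)) := by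
      rw [← Real.sqrt_sq (norm_nonneg w)]
      exact Real.sqrt_le_sqrt (hw2 ▸ hspec2)
    calc ‖w‖ ≤ Real.sqrt lam * Real.sqrt (V ⬝ᵥ V) := by rwa [← Real.sqrt_mul hlam]
      _ ≤ Real.sqrt lam * (approxSig φ τ xs z x / τ) :=
          mul_le_mul_of_nonneg_left hVVσ (Real.sqrt_nonneg _)
  calc |V ⬝ᵥ (fun i => ⟪θ, φ (xs i)⟫ - ⟪P θ, φ (xs i)⟫)| = |⟪θ - P θ, w⟫| := by rw [hVr]
    _ ≤ Ck * ‖w‖ := habs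
    _ ≤ Ck * (Real.sqrt lam * (approxSig φ τ xs z x / τ)) :=
        mul_le_mul_of_nonneg_left hwle hCk.le
    _ = Ck * Real.sqrt lam * approxSig φ τ xs z x / τ := by ring
end
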